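/- Let A be a simplicial abelian group and n ≥ 0. Then the underlying simplicial set of A is an n-hypergroupoid if and only if the normalized Moore complex N(A), with N_m(A) = ⋂_{i=1}^{m} ker(∂_i : A_m → A_{m−1}), vanishes in all degrees m > n. In particular, under the Dold–Kan correspondence, n-hypergroupoids in abelian groups correspond exactly to chain complexes concentrated in degrees [0, n]. -/

import Mathlib

/-!
Because `A` is a simplicial abelian group, the partial matching maps are homomorphisms, so they
are injective iff their kernels `{z | ∂ⱼ z = 0 for all j ≠ k}` vanish; for `k = 0` this kernel
is `N_m(A)`. If it vanishes, so do the kernels for all `k`: for `z` in the `k+1`-st kernel,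
`z - s_k ∂_{k+1} z` lies in the `k`-th one, and `z = s_k w` forces `w = ∂_k z = 0`.
Surjectivity is Moore's theorem that simplicial groups are Kan: a compatible horn `y` supported
in an interval `[a, b] ∋ k` becomes one supported in a smaller interval after subtracting the
faces of `s_a y_a` (if `a < k`) or of `s_{b-1} y_b` (if `k < b`).
-/

open CategoryTheory Simplicial SSet

universe u

/-- The partial matching map of a simplicial set `X`: restriction of `m`-simplices
(viewed as maps `Δ[m] ⟶ X`) along the horn inclusion `Λ[m, k] ⊆ Δ[m]`. -/
def partialMatchingMap (X : SSet.{u}) (m : ℕ) (k : Fin (m + 1)) (x : X _⦋m⦌) :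
    ((Λ[m, k] : SSet.{u}) ⟶ X) :=
  (Λ[m, k] : (Δ[m] : SSet.{u}).Subcomplex).ι ≫ (SSet.yonedaEquiv (X := X) (n := ⦋m⦌)).symm x

/-- A simplicial set `X` is an `n`-hypergroupoid if all partial matching maps
`X_m → Hom(Λ[m,k], X)` (for `m ≥ 1`, `0 ≤ k ≤ m`) are surjective, and those with `m > n`
are bijective. -/
def IsHypergroupoid (n : ℕ) (X : SSet.{u}) : Prop :=
  (∀ (m : ℕ) (k : Fin (m + 2)), Function.Surjective (partialMatchingMap X (m + 1) k)) ∧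
  (∀ (m : ℕ) (k : Fin (m + 2)), n < m + 1 →
    Function.Bijective (partialMatchingMap X (m + 1) k))

section Horn

variable {X : SSet.{u}} {m : ℕ} {k : Fin (m + 2)}

lemma partialMatchingMap_eq_iff (x : X _⦋m + 1⦌) (σ : (Λ[m + 1, k] : SSet.{u}) ⟶ X) :
    partialMatchingMap X (m + 1) k x = σ ↔
      ∀ (j : Fin (m + 2)) (hj : j ≠ k), X.δ j x = σ.app _ (horn.face k j hj) :=
  ⟨fun h _ _ => h ▸ rfl, fun h => horn.hom_ext _ _ h⟩

lemma partialMatchingMap_eq_partialMatchingMap_iff (x x' : X _⦋m + 1⦌) :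
    partialMatchingMap X (m + 1) k x = partialMatchingMap X (m + 1) k x' ↔
      ∀ j ≠ k, X.δ j x = X.δ j x' :=
  partialMatchingMap_eq_iff x _

lemma partialMatchingMap_one_surjective (k : Fin 2) :
    Function.Surjective (partialMatchingMap X 1 k) := by
  intro σ
  have hk : k.rev ≠ k := by fin_cases k <;> decide
  refine ⟨X.σ 0 (σ.app _ (horn.face k k.rev hk)), (partialMatchingMap_eq_iff _ σ).2 ?_⟩
  intro j hj
  obtain rfl : j = k.rev := by fin_cases k <;> fin_cases j <;> simp_all
  fin_cases k
  · exact ConcreteCategory.congr_hom (X.δ_comp_σ_succ (i := 0)) _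
  · exact ConcreteCategory.congr_hom (X.δ_comp_σ_self (i := 0)) _

lemma horn_face_compatible {k : Fin (m + 3)} (σ : (Λ[m + 2, k] : SSet.{u}) ⟶ X)
    (j l : Fin (m + 3)) (hj : j ≠ k) (hl : l ≠ k) (hjl : j < l) :
    X.δ (l.pred (Fin.ne_zero_of_lt hjl)) (σ.app _ (horn.face k j hj)) =
      X.δ (j.castPred (Fin.ne_last_of_lt hjl)) (σ.app _ (horn.face k l hl)) := by
  have h := congrArg yonedaEquiv ((horn.IsCompatible.of_hom σ).δ_pred_comp j l hj hl hjl)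
  rwa [stdSimplex.yonedaEquiv_δ_comp, stdSimplex.yonedaEquiv_δ_comp, yonedaEquiv_comp,
    yonedaEquiv_comp, horn.yonedaEquiv_ι, horn.yonedaEquiv_ι] at h

end Horn

namespace CategoryTheory.SimplicialObject

variable {A : SimplicialObject AddCommGrpCat.{u}} {m : ℕ}

lemma δ_σ_eq_zero_of_lt {i : Fin (m + 2)} {j : Fin (m + 3)} (hji : j < i.castSucc)
    {w : A _⦋m + 1⦌} (hw : A.δ (j.castPred (Fin.ne_last_of_lt hji)) w = 0) :
    A.δ j (A.σ i w) = 0 := by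
  obtain ⟨i, rfl⟩ := Fin.exists_succ_eq.2 (show i ≠ 0 by rintro rfl; simp at hji)
  have h := ConcreteCategory.congr_hom
    (A.δ_comp_σ_of_le (i := j.castPred (Fin.ne_last_of_lt hji)) (j := i) (by
      rw [← Fin.castSucc_le_castSucc_iff, Fin.castSucc_castPred]
      exact Fin.le_castSucc_iff.2 hji)) w
  rw [Fin.castSucc_castPred] at h
  rw [← ConcreteCategory.comp_apply, h, ConcreteCategory.comp_apply, hw, map_zero]

lemma δ_σ_eq_zero_of_gt {i : Fin (m + 2)} {j : Fin (m + 3)} (hij : i.succ < j)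
    {w : A _⦋m + 1⦌} (hw : A.δ (j.pred (Fin.ne_zero_of_lt hij)) w = 0) :
    A.δ j (A.σ i w) = 0 := by
  rw [← ConcreteCategory.comp_apply, A.δ_comp_σ_of_gt' hij, ConcreteCategory.comp_apply, hw,
    map_zero]

lemma δ_σ_of_eq {i : Fin (m + 1)} {r : Fin (m + 2)} (hr : r = i.castSucc ∨ r = i.succ)
    (w : A _⦋m⦌) : A.δ r (A.σ i w) = w := by
  rw [← ConcreteCategory.comp_apply]
  rcases hr with rfl | rfl
  · rw [A.δ_comp_σ_self]; rfl
  · rw [A.δ_comp_σ_succ]; rfl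

/-- `y` satisfies the compatibilities of the faces of a horn `Λ[m + 2, k] ⟶ A`;
`y k` is ignored. -/
def IsHornCompatible (A : SimplicialObject AddCommGrpCat.{u}) (k : Fin (m + 3))
    (y : Fin (m + 3) → A _⦋m + 1⦌) : Prop :=
  ∀ (j l : Fin (m + 3)), j ≠ k → l ≠ k → (hjl : j < l) →
    A.δ (l.pred (Fin.ne_zero_of_lt hjl)) (y j) = A.δ (j.castPred (Fin.ne_last_of_lt hjl)) (y l)

lemma isHornCompatible_δ (k : Fin (m + 3)) (x : A _⦋m + 2⦌) :
    A.IsHornCompatible k (fun j => A.δ j x) := by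
  intro j l _ _ hjl
  rw [← ConcreteCategory.comp_apply, ← ConcreteCategory.comp_apply,
    A.δ_comp_δ' (i := j.castPred (Fin.ne_last_of_lt hjl)) (by simpa using hjl)]
  rfl

namespace IsHornCompatible

variable {k : Fin (m + 3)} {e : Fin (m + 3) → A _⦋m + 1⦌}

lemma sub {y : Fin (m + 3) → A _⦋m + 1⦌} (he : A.IsHornCompatible k e)
    (hy : A.IsHornCompatible k y) : A.IsHornCompatible k (e - y) := by
  intro j l hj hl hjl
  simp only [Pi.sub_apply, map_sub, he j l hj hl hjl, hy j l hj hl hjl]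

lemma δ_σ_eq_zero (he : A.IsHornCompatible k e) {i : Fin (m + 2)} {r j : Fin (m + 3)}
    (hr : r = i.castSucc ∨ r = i.succ) (hrk : r ≠ k) (hjk : j ≠ k)
    (hji : j ≠ i.castSucc) (hji' : j ≠ i.succ) (hej : e j = 0) :
    A.δ j (A.σ i (e r)) = 0 := by
  rcases lt_or_gt_of_ne hji with hlt | hgt
  · have hjr : j < r := by
      rcases hr with rfl | rfl <;> [exact hlt; exact hlt.trans Fin.castSucc_lt_succ]
    refine δ_σ_eq_zero_of_lt hlt ?_
    rw [← he j r hjk hrk hjr, hej, map_zero]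
  · have hij : i.succ < j := lt_of_le_of_ne (Fin.castSucc_lt_iff_succ_le.1 hgt) hji'.symm
    have hrj : r < j := by
      rcases hr with rfl | rfl <;> [exact Fin.castSucc_lt_succ.trans hij; exact hij]
    refine δ_σ_eq_zero_of_gt hij ?_
    rw [he r j hrk hjk hrj, hej, map_zero]

lemma exists_δ_eq_of_sub_δ (v : A _⦋m + 2⦌)
    (h : ∃ x : A _⦋m + 2⦌, ∀ j ≠ k, A.δ j x = e j - A.δ j v) :
    ∃ x : A _⦋m + 2⦌, ∀ j ≠ k, A.δ j x = e j := by
  obtain ⟨x, hx⟩ := h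
  exact ⟨x + v, fun j hj => by rw [map_add, hx j hj, sub_add_cancel]⟩

lemma exists_δ_eq_of_eq_zero_outside {e : Fin (m + 3) → A _⦋m + 1⦌}
    (he : A.IsHornCompatible k e) {a b : Fin (m + 3)}
    (ha : a ≤ k) (hb : k ≤ b) (hzero : ∀ j, j < a ∨ b < j → e j = 0) :
    ∃ x : A _⦋m + 2⦌, ∀ j ≠ k, A.δ j x = e j := by
  by_cases hak : a < k
  · obtain ⟨i, rfl⟩ := Fin.exists_castSucc_eq.2 (Fin.ne_last_of_lt hak)
    refine exists_δ_eq_of_sub_δ (A.σ i (e i.castSucc)) <|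
      exists_δ_eq_of_eq_zero_outside (he.sub (isHornCompatible_δ k _)) (a := i.succ) (b := b)
        (Fin.castSucc_lt_iff_succ_le.1 hak) hb fun j hj => ?_
    by_cases hja : j = i.castSucc
    · rw [hja, δ_σ_of_eq (Or.inl rfl), sub_self]
    · have hej : e j = 0 := hzero j (by grind)
      rw [hej, he.δ_σ_eq_zero (Or.inl rfl) (by grind) (by grind) (by grind) (by grind) hej,
        sub_self]
  by_cases hkb : k < b
  · obtain ⟨i, rfl⟩ := Fin.exists_succ_eq.2 (Fin.ne_zero_of_lt hkb)
    refine exists_δ_eq_of_sub_δ (A.σ i (e i.succ)) <|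
      exists_δ_eq_of_eq_zero_outside (he.sub (isHornCompatible_δ k _)) (a := a) (b := i.castSucc)
        ha (Fin.le_castSucc_iff.2 hkb) fun j hj => ?_
    by_cases hjb : j = i.succ
    · rw [hjb, δ_σ_of_eq (Or.inr rfl), sub_self]
    · have hej : e j = 0 := hzero j (by grind)
      rw [hej, he.δ_σ_eq_zero (Or.inr rfl) (by grind) (by grind) (by grind) (by grind) hej,
        sub_self]
  refine ⟨0, fun j hj => ?_⟩
  rw [map_zero, hzero j (by grind)]
termination_by (b : ℕ) - a
decreasing_by all_goals grind

lemma exists_δ_eq (he : A.IsHornCompatible k e) :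
    ∃ x : A _⦋m + 2⦌, ∀ j ≠ k, A.δ j x = e j :=
  exists_δ_eq_of_eq_zero_outside he (Fin.zero_le k) (Fin.le_last k) fun j hj => by
    simp [(Fin.le_last j).not_gt] at hj

end IsHornCompatible

variable (A)

lemma eq_zero_of_δ_eq_zero (h₀ : ∀ z : A _⦋m + 1⦌, (∀ j ≠ 0, A.δ j z = 0) → z = 0)
    (k : Fin (m + 2)) (z : A _⦋m + 1⦌) (hz : ∀ j ≠ k, A.δ j z = 0) : z = 0 := by
  induction k using Fin.induction generalizing z with
  | zero => exact h₀ z hz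
  | succ k ih =>
    set w := A.δ k.succ z
    have hv : z - A.σ k w = 0 := ih _ fun j hj => by
      by_cases hjk : j = k.succ
      · rw [hjk, map_sub, δ_σ_of_eq (Or.inr rfl), sub_self]
      obtain _ | m := m
      · fin_cases j <;> fin_cases k <;> simp_all
      rw [map_sub, hz j hjk, zero_sub, neg_eq_zero]
      exact (isHornCompatible_δ k.castSucc z).δ_σ_eq_zero (Or.inr rfl) Fin.castSucc_lt_succ.ne'
        hj hj hjk (hz j hjk)
    have hw : w = 0 := by
      rw [← δ_σ_of_eq (Or.inl rfl) w, ← sub_eq_zero.1 hv, hz _ Fin.castSucc_lt_succ.ne]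
    rw [sub_eq_zero.1 hv, hw, map_zero]

open AlgebraicTopology in
lemma normalizedMooreComplex_objX_succ_eq_bot_iff :
    NormalizedMooreComplex.objX A (m + 1) = ⊥ ↔
      ∀ z : A _⦋m + 1⦌, (∀ j ≠ 0, A.δ j z = 0) → z = 0 := by
  have factors_iff {W : AddCommGrpCat.{u}} (f : W ⟶ A _⦋m + 1⦌) :
      (NormalizedMooreComplex.objX A (m + 1)).Factors f ↔
        ∀ i : Fin (m + 1), f ≫ A.δ i.succ = 0 := by
    simp only [NormalizedMooreComplex.objX_add_one, Subobject.finset_inf_factors,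
      Limits.kernelSubobject_factors_iff, Finset.mem_univ, forall_const]
  constructor
  · intro h z hz
    let K : AddSubgroup (A _⦋m + 1⦌) := ⨅ i : Fin (m + 1), (A.δ i.succ).hom.ker
    have hK : (NormalizedMooreComplex.objX A (m + 1)).Factors (AddCommGrpCat.ofHom K.subtype) :=
      (factors_iff _).2 fun i => by
        ext ⟨y, hy⟩
        exact AddSubgroup.mem_iInf.1 hy i
    rw [h, Subobject.bot_factors_iff_zero] at hK
    exact ConcreteCategory.congr_hom hK
      ⟨z, AddSubgroup.mem_iInf.2 fun i => hz _ (Fin.succ_ne_zero i)⟩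
  · intro h
    rw [← Subobject.mk_arrow (NormalizedMooreComplex.objX A (m + 1)),
      Subobject.mk_eq_bot_iff_zero]
    ext a
    refine h _ fun j hj => ?_
    obtain ⟨i, rfl⟩ := Fin.exists_succ_eq.2 hj
    exact ConcreteCategory.congr_hom ((factors_iff _).1 (Subobject.factors_self _) i) a

end CategoryTheory.SimplicialObject

section SimplicialAbelianGroup

open CategoryTheory.SimplicialObject

variable (A : SimplicialObject AddCommGrpCat.{u})

lemma partialMatchingMap_surjective (m : ℕ) (k : Fin (m + 2)) :
    Function.Surjective (partialMatchingMap (A ⋙ forget AddCommGrpCat) (m + 1) k) := by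
  obtain _ | m := m
  · exact partialMatchingMap_one_surjective k
  intro σ
  let y : Fin (m + 3) → A _⦋m + 1⦌ := fun j =>
    if h : j = k then 0 else σ.app _ (horn.face k j h)
  have hy (j : Fin (m + 3)) (hj : j ≠ k) : y j = σ.app _ (horn.face k j hj) := dif_neg hj
  have hcompat : A.IsHornCompatible k y := fun j l hj hl hjl => by
    rw [hy j hj, hy l hl]
    exact horn_face_compatible σ j l hj hl hjl
  obtain ⟨x, hx⟩ := hcompat.exists_δ_eq
  exact ⟨x, (partialMatchingMap_eq_iff x σ).2 fun j hj => (hx j hj).trans (hy j hj)⟩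

lemma partialMatchingMap_injective_iff (m : ℕ) (k : Fin (m + 2)) :
    Function.Injective (partialMatchingMap (A ⋙ forget AddCommGrpCat) (m + 1) k) ↔
      ∀ z : A _⦋m + 1⦌, (∀ j ≠ k, A.δ j z = 0) → z = 0 := by
  simp only [Function.Injective, partialMatchingMap_eq_partialMatchingMap_iff]
  constructor
  · intro h z hz
    exact h (a₂ := (0 : A _⦋m + 1⦌)) fun j hj => (hz j hj).trans (map_zero (A.δ j).hom).symm
  · intro h (x : A _⦋m + 1⦌) (x' : A _⦋m + 1⦌) hxx'
    refine sub_eq_zero.1 (h (x - x') fun j hj => ?_)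
    rw [map_sub, sub_eq_zero]
    exact hxx' j hj

end SimplicialAbelianGroup

/-- Let `A` be a simplicial abelian group and `n ≥ 0`. The underlying
simplicial set of `A` is an `n`-hypergroupoid if and only if the normalized Moore complex
`N(A)` (with `N_m(A) = ⋂_{i=1}^m ker ∂ᵢ`) vanishes in all degrees `m > n`. -/
theorem isHypergroupoid_iff_normalizedMooreComplex_vanishes
    (A : CategoryTheory.SimplicialObject AddCommGrpCat.{u}) (n : ℕ) :
    IsHypergroupoid n (A ⋙ forget AddCommGrpCat) ↔
      ∀ m : ℕ, n < m → AlgebraicTopology.NormalizedMooreComplex.objX A m = ⊥ := by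
  constructor
  · rintro ⟨-, hbij⟩ m hm
    obtain ⟨m, rfl⟩ := Nat.exists_eq_succ_of_ne_zero (Nat.ne_zero_of_lt hm)
    exact A.normalizedMooreComplex_objX_succ_eq_bot_iff.2 <|
      (partialMatchingMap_injective_iff A m 0).1 (hbij m 0 hm).injective
  · intro hN
    refine ⟨partialMatchingMap_surjective A, fun m k hm =>
      ⟨?_, partialMatchingMap_surjective A m k⟩⟩
    exact (partialMatchingMap_injective_iff A m k).2 <|
      A.eq_zero_of_δ_eq_zero (A.normalizedMooreComplex_objX_succ_eq_bot_iff.1 (hN _ hm)) k
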